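/- Upper bound of Sanov's theorem for a single type class: if observations are i.i.d. from μ on a finite alphabet, then for any probability law ν that is a type of denominator n (i.e., nν(σ) ∈ ℕ for all σ), the probability that the empirical measure equals ν is at most exp(−n D(ν‖μ)). -/

import Mathlib

/-!
Every sequence `g` whose empirical measure is `ν` contains each letter `σ` exactly `n ν(σ)` times,
so its `μ`-probability `∏ σ, μ(σ)^(n ν(σ))` equals its `ν`-probability times `exp(-n D(ν‖μ))`.
Summing over the type class, the `ν`-probabilities add up to at most one.
-/

open scoped Classical

/-- KL divergence on a finite alphabet (natural log, convention `0 log 0 = 0`). -/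
noncomputable def KLdiv {α : Type*} [Fintype α] (ν μ : α → ℝ) : ℝ :=
  ∑ σ, ν σ * Real.log (ν σ / μ σ)

open Finset Real

section TypeClass

variable {α : Type*} {n : ℕ}

theorem prod_comp_eq_prod_pow_card_fiber [Fintype α] [DecidableEq α] {M : Type*} [CommMonoid M]
    (f : α → M) (g : Fin n → α) : ∏ i, f (g i) = ∏ σ, f σ ^ #{i | g i = σ} := by
  rw [← prod_fiberwise' univ g f]
  simp only [prod_const]

theorem card_fiber_eq_mul_of_empirical_eq [DecidableEq α] {ν : α → ℝ} {g : Fin n → α} {σ : α}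
    (h : ν σ = (1 / (n : ℝ)) * ∑ i, (if g i = σ then (1 : ℝ) else 0)) :
    (#{i | g i = σ} : ℝ) = n * ν σ := by
  rw [sum_boole] at h
  rcases Nat.eq_zero_or_pos n with rfl | hn
  -- for `n = 0` both sides vanish, whatever the junk value `1 / 0 = 0` makes of `h`
  · simp
  · rw [h]
    field_simp

theorem Real.pow_eq_pow_mul_exp_neg_mul_log_div {p q : ℝ} (hp : 0 < p) (hq : 0 ≤ q) {m : ℕ}
    (hm : q = 0 → m = 0) : p ^ m = q ^ m * exp (-(m * log (q / p))) := by
  rcases hq.eq_or_lt with rfl | hq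
  · simp [hm rfl]
  · rw [log_div hq.ne' hp.ne', mul_sub, neg_sub, exp_sub, exp_nat_mul, exp_nat_mul, exp_log hp,
      exp_log hq]
    field_simp

theorem prod_eq_prod_mul_exp_neg_mul_KLdiv [Fintype α] [DecidableEq α] {μ ν : α → ℝ}
    (hμ : ∀ σ, 0 < μ σ) (hν : ∀ σ, 0 ≤ ν σ) {g : Fin n → α}
    (hg : ∀ σ, (#{i | g i = σ} : ℝ) = n * ν σ) :
    ∏ i, μ (g i) = (∏ i, ν (g i)) * exp (-(n : ℝ) * KLdiv ν μ) := by
  have hletter : ∀ σ, μ σ ^ #{i | g i = σ}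
      = ν σ ^ #{i | g i = σ} * exp (-(n : ℝ) * (ν σ * log (ν σ / μ σ))) := by
    intro σ
    rw [Real.pow_eq_pow_mul_exp_neg_mul_log_div (hμ σ) (hν σ), hg σ]
    · ring_nf
    · intro h0
      have hcard := hg σ
      rw [h0, mul_zero] at hcard
      exact_mod_cast hcard
  rw [prod_comp_eq_prod_pow_card_fiber μ, prod_comp_eq_prod_pow_card_fiber ν, KLdiv, mul_sum,
    exp_sum, ← prod_mul_distrib]
  exact prod_congr rfl fun σ _ => hletter σ

theorem sum_prod_le_one [Fintype α] {ν : α → ℝ} (hν0 : ∀ σ, 0 ≤ ν σ) (hν1 : ∑ σ, ν σ = 1)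
    (s : Finset (Fin n → α)) : ∑ g ∈ s, ∏ i, ν (g i) ≤ 1 :=
  calc ∑ g ∈ s, ∏ i, ν (g i)
      ≤ ∑ g : Fin n → α, ∏ i, ν (g i) :=
        sum_le_sum_of_subset_of_nonneg (subset_univ s)
          fun g _ _ => prod_nonneg fun i _ => hν0 (g i)
    _ = 1 := by rw [← Fintype.sum_pow, hν1, one_pow]

end TypeClass

theorem sanov_upper_bound_type_class_general {α : Type*} [Fintype α] [DecidableEq α]
    (μ : α → ℝ) (hμ0 : ∀ σ, 0 < μ σ)
    (n : ℕ)
    (ν : α → ℝ) (hν0 : ∀ σ, 0 ≤ ν σ) (hν1 : ∑ σ, ν σ = 1) :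
    ∑ g ∈ Finset.univ.filter
        (fun g : Fin n → α =>
          ∀ σ, ν σ = (1 / (n : ℝ)) * ∑ i, (if g i = σ then (1 : ℝ) else 0)),
      ∏ i, μ (g i)
    ≤ Real.exp (-(n : ℝ) * KLdiv ν μ) := by
  set typeClass := Finset.univ.filter fun g : Fin n → α =>
    ∀ σ, ν σ = (1 / (n : ℝ)) * ∑ i, (if g i = σ then (1 : ℝ) else 0)
  calc ∑ g ∈ typeClass, ∏ i, μ (g i)
      = (∑ g ∈ typeClass, ∏ i, ν (g i)) * exp (-(n : ℝ) * KLdiv ν μ) := by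
        rw [sum_mul]
        refine sum_congr rfl fun g hg => prod_eq_prod_mul_exp_neg_mul_KLdiv hμ0 hν0 fun σ => ?_
        exact card_fiber_eq_mul_of_empirical_eq ((mem_filter.mp hg).2 σ)
    _ ≤ 1 * exp (-(n : ℝ) * KLdiv ν μ) := by
        gcongr
        exact sum_prod_le_one hν0 hν1 typeClass
    _ = exp (-(n : ℝ) * KLdiv ν μ) := one_mul _

/-- Sanov upper bound for a single type class: if observations are i.i.d. from
a strictly positive PL `μ`, then for any type `ν` of denominator `n`, the
probability that the empirical measure equals `ν` is at most
`exp(−n D(ν‖μ))`. -/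
theorem sanov_upper_bound_type_class {α : Type*} [Fintype α] [DecidableEq α]
    (μ : α → ℝ) (hμ0 : ∀ σ, 0 < μ σ) (hμ1 : ∑ σ, μ σ = 1)
    (n : ℕ) (hn : 1 ≤ n)
    (ν : α → ℝ) (hν0 : ∀ σ, 0 ≤ ν σ) (hν1 : ∑ σ, ν σ = 1)
    (htype : ∀ σ, ∃ m : ℕ, ν σ = (m : ℝ) / (n : ℝ)) :
    ∑ g ∈ Finset.univ.filter
        (fun g : Fin n → α =>
          ∀ σ, ν σ = (1 / (n : ℝ)) * ∑ i, (if g i = σ then (1 : ℝ) else 0)),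
      ∏ i, μ (g i)
    ≤ Real.exp (-(n : ℝ) * KLdiv ν μ) :=
  sanov_upper_bound_type_class_general μ hμ0 n ν hν0 hν1
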